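/- For p-strongly equivalent LPMLN programs P and Q, and arbitrary LPMLN programs R1 and R2 such that PSM(Q ∪ R1) ∩ PSM(Q ∪ R2) ≠ ∅, there exist a real number c and an integer k such that for any SE-model (X,Y) of Q with Y ∈ PSM(Q ∪ R1) ∪ PSM(Q ∪ R2), W(P,(X,Y)) = exp(c + k·α) · W(Q,(X,Y)). -/

import Mathlib

open scoped Classical

noncomputable section

namespace LPMLN

/-- A ground literal: an atom (numbered by `ℕ`) or its classical negation. -/
inductive Lit where
  | pos : ℕ → Lit
  | neg : ℕ → Lit
deriving DecidableEq

/-- The complementary literal. -/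
def Lit.compl : Lit → Lit
  | .pos a => .neg a
  | .neg a => .pos a

/-- A finite set of literals is consistent if it contains no complementary pair. -/
def Consistent (I : Finset Lit) : Prop := ∀ l ∈ I, l.compl ∉ I

/-- An ASP rule, given by its head, positive body and negative body. -/
structure Rule where
  head : Finset Lit
  pos : Finset Lit
  neg : Finset Lit
deriving DecidableEq

/-- The literals occurring in a rule. -/
def Rule.lits (r : Rule) : Finset Lit := r.head ∪ r.pos ∪ r.neg

/-- Satisfaction of a rule by a set of literals. -/
def Sat (I : Finset Lit) (r : Rule) : Prop :=
  r.pos ⊆ I → r.neg ∩ I = ∅ → (r.head ∩ I).Nonempty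

/-- Satisfaction of an ASP program. -/
def SatProg (I : Finset Lit) (prog : Finset Rule) : Prop := ∀ r ∈ prog, Sat I r

/-- The GL-reduct of an ASP program w.r.t. an interpretation. -/
def glReduct (prog : Finset Rule) (I : Finset Lit) : Finset Rule :=
  (prog.filter fun r => r.neg ∩ I = ∅).image fun r => ⟨r.head, r.pos, ∅⟩

/-- `I` is a stable model of the ASP program `prog`: `I` is a consistent set of
literals satisfying the GL-reduct, no proper subset of which satisfies the GL-reduct. -/
def AspStable (prog : Finset Rule) (I : Finset Lit) : Prop :=
  Consistent I ∧ SatProg I (glReduct prog I) ∧ ∀ J ⊂ I, ¬ SatProg J (glReduct prog I)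

/-- A weight: a real number (soft rule) or the symbol `α` (hard rule). -/
inductive Weight where
  | soft : ℝ → Weight
  | hard : Weight

/-- The real value of a soft weight (hard weights get the dummy value 0). -/
def Weight.val : Weight → ℝ
  | .soft w => w
  | .hard => 0

/-- A weighted rule `w : r`. -/
structure WRule where
  w : Weight
  r : Rule

/-- An LPMLN program: a finite set of weighted rules. -/
abbrev Program := Finset WRule

/-- The LPMLN reduct `P_I`: the rules of `P` satisfied by `I`. -/
def reduct (P : Program) (I : Finset Lit) : Program := P.filter fun wr => Sat I wr.r

/-- The unweighted ASP counterpart of an LPMLN program. -/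
def unweighted (P : Program) : Finset Rule := P.image fun wr => wr.r

/-- `I` is a stable model of the LPMLN program `P`: `I` is a stable model of the
unweighted ASP counterpart of the LPMLN reduct `P_I`. -/
def Stable (P : Program) (I : Finset Lit) : Prop :=
  AspStable (unweighted (reduct P I)) I

/-- The literals occurring in an LPMLN program. -/
def litset (P : Program) : Finset Lit := P.biUnion fun wr => wr.r.lits

/-- `(X, Y)` is an SE-interpretation: a pair of interpretations with `X ⊆ Y`. -/
def SEInterp (X Y : Finset Lit) : Prop := Consistent X ∧ Consistent Y ∧ X ⊆ Y

/-- `(X, Y)` is an SE-model of the LPMLN program `P`: an SE-interpretation such that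
`X` satisfies the GL-reduct (w.r.t. `Y`) of the unweighted version of `P_Y`. -/
def SEModel (P : Program) (X Y : Finset Lit) : Prop :=
  SEInterp X Y ∧ SatProg X (glReduct (unweighted (reduct P Y)) Y)

/-- The number of hard rules of `P` satisfied by `I`. -/
def hardCount (P : Program) (I : Finset Lit) : ℕ :=
  ((reduct P I).filter fun wr => wr.w = Weight.hard).card

/-- The sum of the weights of the soft rules of `P` satisfied by `I`. -/
def softWeight (P : Program) (I : Finset Lit) : ℝ :=
  ∑ wr ∈ ((reduct P I).filter fun wr => wr.w ≠ Weight.hard), wr.w.val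

/-- The weight degree `W(P, I) = exp(Σ_{w:r ∈ P_I} w)`, viewed as the real-valued
function `A ↦ exp(c' + k'·A)` of the value `A` given to the symbol `α`, where `k'` is
the number of hard rules of `P` satisfied by `I` and `c'` the sum of the weights of the
soft rules of `P` satisfied by `I`. -/
def wdeg (P : Program) (I : Finset Lit) (A : ℝ) : ℝ :=
  Real.exp (softWeight P I + A * hardCount P I)

/-- The (finite) set of stable models of `P` (every stable model of `P` is a subset of
`litset P`). -/
def SMset (P : Program) : Finset (Finset Lit) :=
  (litset P).powerset.filter fun I => Stable P I

/-- The probability degree `Pr(P, I)`: the limit, as `α → ∞`, of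
`W(P, I) / Σ_{I' ∈ SM(P)} W(P, I')` if `I` is a stable model of `P`, and `0` otherwise. -/
def PrDeg (P : Program) (I : Finset Lit) : ℝ :=
  if Stable P I then
    Filter.limUnder Filter.atTop fun A => wdeg P I A / ∑ I' ∈ SMset P, wdeg P I' A
  else 0

/-- `I` is a probabilistic stable model of `P`: a stable model of `P` satisfying the
maximum number of hard rules of `P` (equivalently, with nonzero probability degree). -/
def PStable (P : Program) (I : Finset Lit) : Prop :=
  Stable P I ∧ ∀ J, Stable P J → hardCount P J ≤ hardCount P I

/-- Semi-strong equivalence: the extensions by any LPMLN program have the same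
stable models. -/
def SemiStrongEq (P Q : Program) : Prop :=
  ∀ R : Program, ∀ I, Stable (P ∪ R) I ↔ Stable (Q ∪ R) I

/-- p-ordinary equivalence: same stable models and same probability degrees. -/
def POrdEq (P Q : Program) : Prop :=
  (∀ I, Stable P I ↔ Stable Q I) ∧ ∀ I, Stable P I → PrDeg P I = PrDeg Q I

/-- p-strong equivalence: p-ordinary equivalence under every extension. -/
def PStrongEq (P Q : Program) : Prop := ∀ R : Program, POrdEq (P ∪ R) (Q ∪ R)

/-- Comparison of the symbolic weight degrees of two interpretations w.r.t. `P`: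
`exp(c + k·α) ≤ exp(c' + k'·α)` iff `k < k'`, or `k = k'` and `c ≤ c'`. -/
def WLe (P : Program) (I J : Finset Lit) : Prop :=
  hardCount P I < hardCount P J ∨
    (hardCount P I = hardCount P J ∧ softWeight P I ≤ softWeight P J)

/-- q-strong equivalence: same stable models under every extension, with
order-preserving weight degrees. -/
def QStrongEq (P Q : Program) : Prop :=
  ∀ R : Program,
    (∀ I, Stable (P ∪ R) I ↔ Stable (Q ∪ R) I) ∧
    ∀ X Y, Stable (P ∪ R) X → Stable (P ∪ R) Y → (WLe (P ∪ R) X Y ↔ WLe (Q ∪ R) X Y)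

/-- A soft stable model of `P`: a stable model of `P` satisfying all hard rules of `P`. -/
def SoftStable (P : Program) (I : Finset Lit) : Prop :=
  Stable P I ∧ ∀ wr ∈ P, wr.w = Weight.hard → Sat I wr.r

/-- A soft SE-model of `P`: an SE-model `(X, Y)` of `P` such that `Y` satisfies all
hard rules of `P`. -/
def SoftSEModel (P : Program) (X Y : Finset Lit) : Prop :=
  SEModel P X Y ∧ ∀ wr ∈ P, wr.w = Weight.hard → Sat Y wr.r

/-- The (finite) set of soft stable models of `P`. -/
def SSMset (P : Program) : Finset (Finset Lit) :=
  (litset P).powerset.filter fun I => SoftStable P I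

/-- The probability degree under the soft stable model semantics:
`Pr_s(P, X) = W_s(P, X) / Σ_{X' ∈ SSM(P)} W_s(P, X')`, where
`W_s(P, X) = exp(Σ_{w:r ∈ P^s, X ⊨ r} w)`. -/
def PrS (P : Program) (X : Finset Lit) : ℝ :=
  Real.exp (softWeight P X) / ∑ X' ∈ SSMset P, Real.exp (softWeight P X')

/-- sp-strong equivalence: p-strong equivalence under the soft stable model
semantics. -/
def SPStrongEq (P Q : Program) : Prop :=
  ∀ R : Program,
    (∀ I, SoftStable (P ∪ R) I ↔ SoftStable (Q ∪ R) I) ∧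
    ∀ X, SoftStable (P ∪ R) X → PrS (P ∪ R) X = PrS (Q ∪ R) X

/-- `(X, Y)` is a UE-model of `P`: an SE-model with `X = Y`, or with `X ⊊ Y` such that
no `X'` strictly between `X` and `Y` gives an SE-model `(X', Y)`. -/
def UEModel (P : Program) (X Y : Finset Lit) : Prop :=
  SEModel P X Y ∧
    (X = Y ∨ (X ⊂ Y ∧ ∀ X', X ⊂ X' → X' ⊂ Y → ¬ SEModel P X' Y))

/-- A program consisting of weighted facts only (rules with empty bodies). -/
def IsFactProg (R : Program) : Prop := ∀ wr ∈ R, wr.r.pos = ∅ ∧ wr.r.neg = ∅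

/-- p-uniform equivalence: p-ordinary equivalence under every extension by a set of
weighted facts. -/
def PUniformEq (P Q : Program) : Prop :=
  ∀ R : Program, IsFactProg R → POrdEq (P ∪ R) (Q ∪ R)

/-- The flattening rules `R(X, Y, a)`: the two hard rules
`α : ← X, not Y, a` and `α : a ← X, not Y`. -/
def flatten (X Y : Finset Lit) (a : ℕ) : Program :=
  {⟨Weight.hard, ⟨∅, X ∪ {Lit.pos a}, Y⟩⟩, ⟨Weight.hard, ⟨{Lit.pos a}, X, Y⟩⟩}

/-- The hard fact `α : l`. -/
def factOf (l : Lit) : WRule := ⟨Weight.hard, ⟨{l}, ∅, ∅⟩⟩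

/-- The base flattening extension `E⁰(P, U) = P ∪ {α : a | a ∈ U}`. -/
def E0 (P : Program) (U : Finset Lit) : Program := P ∪ U.image factOf

/-- `IsFlatExt P U k E` holds iff `E` is a flattening extension `E^k(P, U)`:
`E⁰(P, U) = P ∪ {α : a | a ∈ U}` and `E^{i+1}(P, U) = E^i(P, U) ∪ R(X ∩ U, U − X, c)`
where `X` is a probabilistic stable model of `E^i(P, U)` and `c` is a fresh atom. -/
inductive IsFlatExt (P : Program) (U : Finset Lit) : ℕ → Program → Prop
  | zero : IsFlatExt P U 0 (E0 P U)
  | succ {i : ℕ} {E : Program} {X : Finset Lit} {c : ℕ} :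
      IsFlatExt P U i E → PStable E X →
      Lit.pos c ∉ litset E → Lit.neg c ∉ litset E →
      IsFlatExt P U (i + 1) (E ∪ flatten (X ∩ U) (U \ X) c)

/-! ### Auxiliary lemmas -/

private lemma head_subset_litset {S : Program} {Y : Finset Lit} {r : Rule}
    (hr : r ∈ unweighted (reduct S Y)) : r.head ⊆ litset S := by
  simp only [unweighted, reduct, Finset.mem_image, Finset.mem_filter] at hr
  obtain ⟨wr, ⟨hwr, _⟩, rfl⟩ := hr
  intro l hl
  simp only [litset, Finset.mem_biUnion]
  exact ⟨wr, hwr, by simp only [Rule.lits, Finset.mem_union]; tauto⟩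

private lemma stable_subset_litset {S : Program} {Y : Finset Lit} (h : Stable S Y) :
    Y ⊆ litset S := by
  obtain ⟨hcons, hsat, hmin⟩ := h
  have hJ : SatProg (Y ∩ litset S) (glReduct (unweighted (reduct S Y)) Y) := by
    intro r' hr'
    intro hpos _
    simp only [glReduct, Finset.mem_image, Finset.mem_filter] at hr'
    obtain ⟨r, ⟨hrmem, hneg⟩, rfl⟩ := hr'
    have hs : Sat Y ⟨r.head, r.pos, ∅⟩ := hsat _ (by
      simp only [glReduct, Finset.mem_image, Finset.mem_filter]
      exact ⟨r, ⟨hrmem, hneg⟩, rfl⟩)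
    have hne : (r.head ∩ Y).Nonempty := by
      apply hs
      · exact hpos.trans Finset.inter_subset_left
      · simp
    obtain ⟨l, hl⟩ := hne
    rw [Finset.mem_inter] at hl
    exact ⟨l, Finset.mem_inter.mpr ⟨hl.1,
      Finset.mem_inter.mpr ⟨hl.2, head_subset_litset hrmem hl.1⟩⟩⟩
  have heq : Y ∩ litset S = Y := by
    by_contra hne
    exact hmin _ (Finset.ssubset_iff_subset_ne.mpr ⟨Finset.inter_subset_left, hne⟩) hJ
  exact Finset.inter_eq_left.mp heq

private lemma mem_SMset {S : Program} {Y : Finset Lit} : Y ∈ SMset S ↔ Stable S Y := by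
  simp only [SMset, Finset.mem_filter, Finset.mem_powerset]
  exact ⟨fun h => h.2, fun h => ⟨stable_subset_litset h, h⟩⟩

private lemma tendsto_exp_coef {c x : ℝ} (hx : x < 0) :
    Filter.Tendsto (fun A : ℝ => Real.exp (c + A * x)) Filter.atTop (nhds 0) := by
  have h1 : Filter.Tendsto (fun A : ℝ => c + A * x) Filter.atTop Filter.atBot :=
    Filter.tendsto_atBot_add_const_left _ c
      ((Filter.tendsto_mul_const_atBot_of_neg hx).mpr Filter.tendsto_id)
  exact Real.tendsto_exp_atBot.comp h1

/-- The symbolic weight degree `exp(c + k·α)` evaluated as a limit: explicit formula for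
the probability degree of a stable model. -/
private lemma prdeg_eq {S : Program} {Y : Finset Lit} (hY : Stable S Y) :
    PrDeg S Y =
      (if hardCount S Y = (SMset S).sup (hardCount S)
        then Real.exp (softWeight S Y) else 0) /
      ∑ I' ∈ (SMset S).filter fun I' => hardCount S I' = (SMset S).sup (hardCount S),
        Real.exp (softWeight S I') := by
  set m := (SMset S).sup (hardCount S) with hm
  have hYmem : Y ∈ SMset S := mem_SMset.mpr hY
  have hterm : ∀ c : ℝ, ∀ h : ℕ, h ≤ m →
      Filter.Tendsto (fun A : ℝ => Real.exp (c + A * ((h : ℝ) - (m : ℝ)))) Filter.atTop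
        (nhds (if h = m then Real.exp c else 0)) := by
    intro c h hh
    rcases eq_or_lt_of_le hh with he | hlt
    · subst he
      simp only [sub_self, mul_zero, add_zero, if_pos rfl]
      exact tendsto_const_nhds
    · rw [if_neg hlt.ne]
      exact tendsto_exp_coef (by
        have : (h : ℝ) < (m : ℝ) := by exact_mod_cast hlt
        linarith)
  have hden : Filter.Tendsto
      (fun A : ℝ => ∑ I' ∈ SMset S,
        Real.exp (softWeight S I' + A * ((hardCount S I' : ℝ) - (m : ℝ)))) Filter.atTop
      (nhds (∑ I' ∈ SMset S,
        if hardCount S I' = m then Real.exp (softWeight S I') else 0)) :=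
    tendsto_finset_sum _ fun I' hI' => hterm _ _ (Finset.le_sup hI')
  have hnum := hterm (softWeight S Y) (hardCount S Y) (Finset.le_sup hYmem)
  have hDval : (∑ I' ∈ SMset S,
      if hardCount S I' = m then Real.exp (softWeight S I') else 0)
      = ∑ I' ∈ (SMset S).filter fun I' => hardCount S I' = m,
          Real.exp (softWeight S I') := (Finset.sum_filter _ _).symm
  have hDpos : 0 < ∑ I' ∈ (SMset S).filter fun I' => hardCount S I' = m,
      Real.exp (softWeight S I') := by
    obtain ⟨J, hJmem, hJeq⟩ := Finset.exists_mem_eq_sup (SMset S) ⟨Y, hYmem⟩ (hardCount S)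
    exact Finset.sum_pos (fun i _ => Real.exp_pos _)
      ⟨J, Finset.mem_filter.mpr ⟨hJmem, hJeq.symm⟩⟩
  have hfe : ∀ A : ℝ, wdeg S Y A / ∑ I' ∈ SMset S, wdeg S I' A
      = Real.exp (softWeight S Y + A * ((hardCount S Y : ℝ) - (m : ℝ))) /
        ∑ I' ∈ SMset S,
          Real.exp (softWeight S I' + A * ((hardCount S I' : ℝ) - (m : ℝ))) := by
    intro A
    have hw : ∀ I' : Finset Lit, wdeg S I' A
        = Real.exp (softWeight S I' + A * ((hardCount S I' : ℝ) - (m : ℝ)))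
          * Real.exp (A * (m : ℝ)) := by
      intro I'
      rw [wdeg, ← Real.exp_add]
      congr 1
      ring
    rw [hw, Finset.sum_congr rfl fun I' _ => hw I', ← Finset.sum_mul,
      mul_div_mul_right _ _ (Real.exp_ne_zero _)]
  have htends : Filter.Tendsto (fun A : ℝ => wdeg S Y A / ∑ I' ∈ SMset S, wdeg S I' A)
      Filter.atTop
      (nhds ((if hardCount S Y = m then Real.exp (softWeight S Y) else 0) /
        ∑ I' ∈ (SMset S).filter fun I' => hardCount S I' = m,
          Real.exp (softWeight S I'))) := by
    rw [← hDval]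
    exact Filter.Tendsto.congr (fun A => (hfe A).symm)
      (hnum.div hden (by rw [hDval]; exact hDpos.ne'))
  rw [PrDeg, if_pos hY]
  exact htends.limUnder_eq

private lemma hc_eq_sup {S : Program} {Y : Finset Lit} (hY : PStable S Y) :
    hardCount S Y = (SMset S).sup (hardCount S) := by
  refine le_antisymm (Finset.le_sup (mem_SMset.mpr hY.1)) ?_
  exact Finset.sup_le fun J hJ => hY.2 J (mem_SMset.mp hJ)

private lemma prdeg_pos {S : Program} {Y : Finset Lit} (hY : PStable S Y) :
    0 < PrDeg S Y := by
  rw [prdeg_eq hY.1, if_pos (hc_eq_sup hY)]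
  apply div_pos (Real.exp_pos _)
  obtain ⟨J, hJmem, hJeq⟩ := Finset.exists_mem_eq_sup (SMset S)
    ⟨Y, mem_SMset.mpr hY.1⟩ (hardCount S)
  exact Finset.sum_pos (fun i _ => Real.exp_pos _)
    ⟨J, Finset.mem_filter.mpr ⟨hJmem, hJeq.symm⟩⟩

private lemma pstable_of_prdeg_pos {S : Program} {Y : Finset Lit} (hY : Stable S Y)
    (h : 0 < PrDeg S Y) : PStable S Y := by
  by_contra hns
  rw [PStable, not_and] at hns
  push_neg at hns
  obtain ⟨J, hJ, hJY⟩ := hns hY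
  have hne : hardCount S Y ≠ (SMset S).sup (hardCount S) := by
    intro he
    exact absurd (he ▸ Finset.le_sup (mem_SMset.mpr hJ)) (not_le.mpr hJY)
  rw [prdeg_eq hY, if_neg hne, zero_div] at h
  exact lt_irrefl _ h

private lemma pstable_transfer {S T : Program} {Y : Finset Lit}
    (hco : ∀ J, Stable S J ↔ Stable T J)
    (hpr : ∀ J, Stable S J → PrDeg S J = PrDeg T J)
    (hY : PStable S Y) : PStable T Y := by
  have hYT : Stable T Y := (hco Y).mp hY.1
  have : 0 < PrDeg T Y := by rw [← hpr Y hY.1]; exact prdeg_pos hY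
  exact pstable_of_prdeg_pos hYT this

private lemma pstable_transfer' {S T : Program} {Y : Finset Lit}
    (hco : ∀ J, Stable S J ↔ Stable T J)
    (hpr : ∀ J, Stable S J → PrDeg S J = PrDeg T J)
    (hY : PStable T Y) : PStable S Y := by
  have hYS : Stable S Y := (hco Y).mpr hY.1
  have : 0 < PrDeg S Y := by rw [hpr Y hYS]; exact prdeg_pos hY
  exact pstable_of_prdeg_pos hYS this

private lemma prdeg_ratio {S : Program} {Y I : Finset Lit} (hY : PStable S Y)
    (hI : PStable S I) :
    PrDeg S Y = Real.exp (softWeight S Y - softWeight S I) * PrDeg S I := by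
  rw [prdeg_eq hY.1, prdeg_eq hI.1, if_pos (hc_eq_sup hY), if_pos (hc_eq_sup hI)]
  rw [mul_div_assoc', ← Real.exp_add, sub_add_cancel]

private lemma soft_diff {S T : Program} {Y I : Finset Lit}
    (hco : ∀ J, Stable S J ↔ Stable T J)
    (hpr : ∀ J, Stable S J → PrDeg S J = PrDeg T J)
    (hY : PStable S Y) (hI : PStable S I) :
    softWeight S Y - softWeight S I = softWeight T Y - softWeight T I := by
  have hYT : PStable T Y := pstable_transfer hco hpr hY
  have hIT : PStable T I := pstable_transfer hco hpr hI
  have h1 := prdeg_ratio hY hI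
  have h2 := prdeg_ratio hYT hIT
  rw [hpr Y hY.1, hpr I hI.1] at h1
  have hpos : PrDeg T I ≠ 0 := (prdeg_pos hIT).ne'
  exact Real.exp_injective (mul_right_cancel₀ hpos (h1.symm.trans h2))

private lemma hardCount_union {A B : Program} (h : Disjoint A B) (Y : Finset Lit) :
    hardCount (A ∪ B) Y = hardCount A Y + hardCount B Y := by
  unfold hardCount reduct
  rw [Finset.filter_union, Finset.filter_union, Finset.card_union_of_disjoint]
  exact h.mono ((Finset.filter_subset _ _).trans (Finset.filter_subset _ _))
    ((Finset.filter_subset _ _).trans (Finset.filter_subset _ _))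

private lemma softWeight_union {A B : Program} (h : Disjoint A B) (Y : Finset Lit) :
    softWeight (A ∪ B) Y = softWeight A Y + softWeight B Y := by
  unfold softWeight reduct
  rw [Finset.filter_union, Finset.filter_union, Finset.sum_union]
  exact h.mono ((Finset.filter_subset _ _).trans (Finset.filter_subset _ _))
    ((Finset.filter_subset _ _).trans (Finset.filter_subset _ _))

/-- For p-strongly equivalent LPMLN programs `P` and `Q`, and arbitrary
LPMLN programs `R₁` and `R₂` such that `PSM(Q ∪ R₁) ∩ PSM(Q ∪ R₂) ≠ ∅`, there exist a
real number `c` and an integer `k` such that for any SE-model `(X, Y)` of `Q` with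
`Y ∈ PSM(Q ∪ R₁) ∪ PSM(Q ∪ R₂)`, `W(P,(X,Y)) = exp(c + k·α) · W(Q,(X,Y))`. -/
theorem pse_onlyif_part1 (P Q R₁ R₂ : Program) (hpq : PStrongEq P Q)
    (hne : ∃ I, PStable (Q ∪ R₁) I ∧ PStable (Q ∪ R₂) I) :
    ∃ (c : ℝ) (k : ℤ), ∀ X Y, SEModel Q X Y →
      (PStable (Q ∪ R₁) Y ∨ PStable (Q ∪ R₂) Y) →
      (hardCount P Y : ℤ) = hardCount Q Y + k ∧ softWeight P Y = softWeight Q Y + c := by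
  obtain ⟨I, hI1, hI2⟩ := hne
  refine ⟨softWeight P I - softWeight Q I,
    (hardCount P I : ℤ) - hardCount Q I, ?_⟩
  rintro X Y _ hY
  have key : ∀ R : Program, PStable (Q ∪ R) Y → PStable (Q ∪ R) I →
      ((hardCount P Y : ℤ) - hardCount Q Y = (hardCount P I : ℤ) - hardCount Q I ∧
        softWeight P Y - softWeight Q Y = softWeight P I - softWeight Q I) := by
    intro R hYB hIB
    -- program equalities
    have e2 : P ∪ (R \ P) = P ∪ R := Finset.union_sdiff_self_eq_union
    have e3 : Q ∪ (R \ Q) = Q ∪ R := Finset.union_sdiff_self_eq_union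
    have e4 : P ∪ (R \ Q) = P ∪ (R \ (P ∪ Q)) := by
      ext wr; simp only [Finset.mem_union, Finset.mem_sdiff]; tauto
    have e5 : Q ∪ (R \ P) = Q ∪ (R \ (P ∪ Q)) := by
      ext wr; simp only [Finset.mem_union, Finset.mem_sdiff]; tauto
    have dP : Disjoint P (R \ (P ∪ Q)) := by
      rw [Finset.disjoint_left]
      intro a ha hb
      simp only [Finset.mem_sdiff, Finset.mem_union] at hb
      exact hb.2 (Or.inl ha)
    have dQ : Disjoint Q (R \ (P ∪ Q)) := by
      rw [Finset.disjoint_left]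
      intro a ha hb
      simp only [Finset.mem_sdiff, Finset.mem_union] at hb
      exact hb.2 (Or.inr ha)
    -- POrdEq instances
    have hAB := hpq R
    have hAD2 := hpq (R \ P)
    rw [e2] at hAD2
    have hD1B := hpq (R \ Q)
    rw [e3] at hD1B
    -- PStable memberships
    have hYA : PStable (P ∪ R) Y := pstable_transfer' hAB.1 hAB.2 hYB
    have hIA : PStable (P ∪ R) I := pstable_transfer' hAB.1 hAB.2 hIB
    have hYD2 : PStable (Q ∪ (R \ P)) Y := pstable_transfer hAD2.1 hAD2.2 hYA
    have hID2 : PStable (Q ∪ (R \ P)) I := pstable_transfer hAD2.1 hAD2.2 hIA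
    have hYD1 : PStable (P ∪ (R \ Q)) Y := pstable_transfer' hD1B.1 hD1B.2 hYB
    have hID1 : PStable (P ∪ (R \ Q)) I := pstable_transfer' hD1B.1 hD1B.2 hIB
    -- hard-count equalities within each program
    have hhD1 : hardCount (P ∪ (R \ Q)) Y = hardCount (P ∪ (R \ Q)) I :=
      le_antisymm (hID1.2 Y hYD1.1) (hYD1.2 I hID1.1)
    have hhD2 : hardCount (Q ∪ (R \ P)) Y = hardCount (Q ∪ (R \ P)) I :=
      le_antisymm (hID2.2 Y hYD2.1) (hYD2.2 I hID2.1)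
    -- soft-weight difference equalities
    have sA : softWeight (P ∪ R) Y - softWeight (P ∪ R) I
        = softWeight (Q ∪ R) Y - softWeight (Q ∪ R) I :=
      soft_diff hAB.1 hAB.2 hYA hIA
    have sD2 : softWeight (P ∪ R) Y - softWeight (P ∪ R) I
        = softWeight (Q ∪ (R \ P)) Y - softWeight (Q ∪ (R \ P)) I :=
      soft_diff hAD2.1 hAD2.2 hYA hIA
    have sD1 : softWeight (P ∪ (R \ Q)) Y - softWeight (P ∪ (R \ Q)) I
        = softWeight (Q ∪ R) Y - softWeight (Q ∪ R) I :=
      soft_diff hD1B.1 hD1B.2 hYD1 hID1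
    -- decompositions
    have hd1Y : hardCount (P ∪ (R \ Q)) Y
        = hardCount P Y + hardCount (R \ (P ∪ Q)) Y := by
      rw [e4]; exact hardCount_union dP Y
    have hd1I : hardCount (P ∪ (R \ Q)) I
        = hardCount P I + hardCount (R \ (P ∪ Q)) I := by
      rw [e4]; exact hardCount_union dP I
    have hd2Y : hardCount (Q ∪ (R \ P)) Y
        = hardCount Q Y + hardCount (R \ (P ∪ Q)) Y := by
      rw [e5]; exact hardCount_union dQ Y
    have hd2I : hardCount (Q ∪ (R \ P)) I
        = hardCount Q I + hardCount (R \ (P ∪ Q)) I := by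
      rw [e5]; exact hardCount_union dQ I
    have sd1Y : softWeight (P ∪ (R \ Q)) Y
        = softWeight P Y + softWeight (R \ (P ∪ Q)) Y := by
      rw [e4]; exact softWeight_union dP Y
    have sd1I : softWeight (P ∪ (R \ Q)) I
        = softWeight P I + softWeight (R \ (P ∪ Q)) I := by
      rw [e4]; exact softWeight_union dP I
    have sd2Y : softWeight (Q ∪ (R \ P)) Y
        = softWeight Q Y + softWeight (R \ (P ∪ Q)) Y := by
      rw [e5]; exact softWeight_union dQ Y
    have sd2I : softWeight (Q ∪ (R \ P)) I
        = softWeight Q I + softWeight (R \ (P ∪ Q)) I := by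
      rw [e5]; exact softWeight_union dQ I
    constructor
    · omega
    · linarith
  rcases hY with h | h
  · obtain ⟨e1, e2⟩ := key R₁ h hI1
    constructor
    · omega
    · linarith
  · obtain ⟨e1, e2⟩ := key R₂ h hI2
    constructor
    · omega
    · linarith

end LPMLN
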